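/- arXiv:1711.05394 — 4 statements merged into one kernel-verified Lean document; each statement's English description precedes it below -/
import Mathlib

section
/- Let n ≥ 5, let S be the cyclic shift matrix on ℝ^(ℤ/nℤ), and set c = √(7/12 + √(1/3)) and b = 1/(12c). Then the matrix B = c·S − (c+b)·I + b·Sᵀ satisfies B Bᵀ = (5/2)·I − (4/3)·(S + Sᵀ) + (1/12)·(S² + (Sᵀ)²), i.e., B is an incidence-matrix factorization of the fourth-order discrete Laplacian with periodic boundary conditions. -/
open Matrix

/-- The `n×n` cyclic shift matrix `S` over `ℤ/nℤ` (modelled as `Fin n`):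
`S i j = 1` if `i = j + 1 (mod n)`, and `0` otherwise. -/
noncomputable def cycShift (n : ℕ) : Matrix (Fin n) (Fin n) ℝ :=
  Matrix.of fun i j => if (i : ℕ) = ((j : ℕ) + 1) % n then 1 else 0

lemma cycShift_eq (n : ℕ) [NeZero n] (hn : 2 ≤ n) :
    cycShift n = ((Equiv.subRight (1 : Fin n)).toPEquiv).toMatrix := by
  ext i j
  simp only [cycShift, Matrix.of_apply, PEquiv.toMatrix_apply, Equiv.toPEquiv_apply,
    Option.mem_def, Option.some_inj, Equiv.subRight_apply]
  have hval : ((j + 1 : Fin n) : ℕ) = ((j : ℕ) + 1) % n := by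
    simp [Fin.add_def, Fin.val_one', Nat.mod_eq_of_lt (show 1 < n by omega)]
  congr 1
  rw [← hval]
  simp only [eq_iff_iff]
  rw [Fin.val_eq_val]
  exact (sub_eq_iff_eq_add).symm

lemma cycShift_mul_transpose (n : ℕ) [NeZero n] (hn : 2 ≤ n) :
    cycShift n * (cycShift n)ᵀ = 1 := by
  rw [cycShift_eq n hn, ← PEquiv.toMatrix_symm, ← PEquiv.toMatrix_trans,
    ← Equiv.toPEquiv_symm, ← Equiv.toPEquiv_trans]
  simp

lemma transpose_mul_cycShift (n : ℕ) [NeZero n] (hn : 2 ≤ n) :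
    (cycShift n)ᵀ * cycShift n = 1 := by
  rw [cycShift_eq n hn, ← PEquiv.toMatrix_symm, ← PEquiv.toMatrix_trans,
    ← Equiv.toPEquiv_symm, ← Equiv.toPEquiv_trans]
  simp

/-- with `c = √(7/12 + √(1/3))` and `b = 1/(12c)`, the matrix
`B = c·S − (c+b)·I + b·Sᵀ` is an incidence-matrix factorization of the
fourth-order periodic discrete Laplacian:
`B Bᵀ = (5/2)·I − (4/3)·(S + Sᵀ) + (1/12)·(S² + (Sᵀ)²)`. -/
theorem stmt_2 (n : ℕ) (hn : 5 ≤ n)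
    (c b : ℝ) (hc : c = Real.sqrt (7 / 12 + Real.sqrt (1 / 3)))
    (hb : b = 1 / (12 * c))
    (B : Matrix (Fin n) (Fin n) ℝ)
    (hB : B = c • cycShift n - (c + b) • (1 : Matrix (Fin n) (Fin n) ℝ)
      + b • (cycShift n)ᵀ) :
    B * Bᵀ = (5 / 2 : ℝ) • (1 : Matrix (Fin n) (Fin n) ℝ)
      - (4 / 3 : ℝ) • (cycShift n + (cycShift n)ᵀ)
      + (1 / 12 : ℝ) • ((cycShift n) ^ 2 + ((cycShift n)ᵀ) ^ 2) := by
  have : NeZero n := ⟨by omega⟩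
  have hs : Real.sqrt (1/3) ^ 2 = 1/3 := Real.sq_sqrt (by norm_num)
  have hs0 : (0:ℝ) ≤ Real.sqrt (1/3) := Real.sqrt_nonneg _
  have hc2 : c ^ 2 = 7/12 + Real.sqrt (1/3) := by
    rw [hc]; exact Real.sq_sqrt (by positivity)
  have hcpos : 0 < c := by
    rw [hc]; apply Real.sqrt_pos.2; positivity
  have hcb : c * b = 1/12 := by
    rw [hb]; field_simp
  have hb2 : b ^ 2 = 7/12 - Real.sqrt (1/3) := by
    have h1 : (c*b)^2 = (1/12)^2 := by rw [hcb]
    have h2 : c^2 * b^2 = 1/144 := by nlinarith [h1]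
    have h3 : (7/12 + Real.sqrt (1/3)) * (7/12 - Real.sqrt (1/3)) = 1/144 := by
      nlinarith [hs]
    have hc2pos : (0:ℝ) < 7/12 + Real.sqrt (1/3) := by positivity
    nlinarith [h2, h3, hc2]
  have h1 := cycShift_mul_transpose n (by omega)
  have h2 := transpose_mul_cycShift n (by omega)
  rw [hB]
  simp only [transpose_add, transpose_sub, transpose_smul, transpose_one, transpose_transpose,
    add_mul, sub_mul, mul_add, mul_sub, Matrix.smul_mul, Matrix.mul_smul, smul_smul,
    Matrix.one_mul, Matrix.mul_one, h1, h2, pow_two]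
  match_scalars <;>
    first
      | linear_combination hcb
      | linear_combination hc2 + hb2 + 2*hcb
      | linear_combination -hc2 - hb2 - 2*hcb
      | linear_combination 2*hc2 + 2*hb2 + 2*hcb
end

section
/- Let N ≥ 1, let p be a real polynomial of degree at most 2N, and let a ≠ 0. Then the Lagrange-interpolation second-derivative formula is exact: p''(0) = −(1/a²)·( 2·p(0)·∑_{l=1}^{N} 1/l² − ∑_{k=1}^{N} ((p(ka) + p(−ka))/k²)·∏_{l=1, l≠k}^{N} l²/(l² − k²) ). -/
/-!
Let `E` be the polynomial with `E(x²) = (p(ax) + p(-ax)) / 2`; it has degree at most `N`, and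
`E'(0) = a² p''(0) / 2`. Interpolating `(E(y) - E(0)) / y` at the `N` nodes `k²` and evaluating at
`0` gives `E'(0) = ∑ₖ wₖ E(k²) / k² - E(0) ∑ₖ wₖ / k²`, where `wₖ = ∏_{l ≠ k} l² / (l² - k²)` are
the Lagrange weights at `0`. The same interpolation applied to `(W(y) - 1) / y` with
`W = ∏ₗ (1 - y / l²)`, which vanishes at every node, shows `∑ₖ wₖ / k² = ∑ₗ 1 / l²`.
-/

open Polynomial Finset

namespace Polynomial

variable {R : Type*}

theorem eval_zero_divX [Semiring R] (p : R[X]) : (divX p).eval 0 = p.coeff 1 := by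
  rw [← coeff_zero_eq_eval_zero, coeff_divX]

theorem eval_divX {K : Type*} [Field K] (p : K[X]) {x : K} (hx : x ≠ 0) :
    (divX p).eval x = (p.eval x - p.eval 0) / x := by
  have h := congr_arg (eval x) (X_mul_divX_add p)
  rw [eval_add, eval_mul, eval_X, eval_C, coeff_zero_eq_eval_zero] at h
  rw [eq_div_iff hx]
  linear_combination h

theorem degree_divX_lt_of_natDegree_le [Semiring R] {p : R[X]} {n : ℕ} (hp : p.natDegree ≤ n) :
    (divX p).degree < n := by
  rw [degree_lt_iff_coeff_zero]
  intro m hm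
  rw [coeff_divX]
  exact coeff_eq_zero_of_natDegree_lt (by omega)

theorem coeff_one_prod_one_sub_C_mul_X [CommRing R] {ι : Type*} (s : Finset ι) (c : ι → R) :
    (∏ i ∈ s, (1 - C (c i) * X)).coeff 1 = -∑ i ∈ s, c i := by
  classical
  induction s using Finset.induction_on with
  | empty => simp [coeff_one]
  | insert i s hi ih =>
    rw [prod_insert hi, sum_insert hi, mul_coeff_one, ih,
      coeff_zero_eq_eval_zero (∏ j ∈ s, _), eval_prod]
    simp [coeff_one]

theorem add_comp_neg_X_eq_two_mul_expand_contract [CommRing R] (p : R[X]) :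
    p + p.comp (-X) = C 2 * expand R 2 (contract 2 p) := by
  ext n
  have hneg : p.comp (-X) = p.comp (C (-1) * X) := by simp
  rw [coeff_add, hneg, comp_C_mul_X_coeff, coeff_C_mul, coeff_expand two_pos,
    coeff_contract two_ne_zero]
  rcases Nat.even_or_odd n with ⟨m, rfl⟩ | hodd
  · rw [if_pos (by omega), show (m + m) / 2 * 2 = m + m by omega, Even.neg_one_pow ⟨m, rfl⟩]
    ring
  · rw [if_neg (by rwa [← even_iff_two_dvd, Nat.not_even_iff_odd]), hodd.neg_one_pow]
    ring

theorem eval_add_eval_neg_eq_two_mul_eval_contract [CommRing R] (p : R[X]) (x : R) :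
    p.eval x + p.eval (-x) = 2 * (contract 2 p).eval (x ^ 2) := by
  simpa using congr_arg (eval x) (add_comp_neg_X_eq_two_mul_expand_contract p)

theorem natDegree_contract_two_le [CommSemiring R] {p : R[X]} {n : ℕ} (hp : p.natDegree ≤ 2 * n) :
    (contract 2 p).natDegree ≤ n := by
  rw [natDegree_le_iff_coeff_eq_zero]
  intro m hm
  rw [coeff_contract two_ne_zero]
  exact coeff_eq_zero_of_natDegree_lt (by omega)

theorem eval_zero_derivative_derivative [Semiring R] (p : R[X]) :
    (derivative (derivative p)).eval 0 = 2 * p.coeff 2 := by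
  rw [← coeff_zero_eq_eval_zero, coeff_derivative, coeff_derivative]
  norm_num
  exact (Commute.ofNat_left 2 _).eq.symm

end Polynomial

namespace Lagrange

variable {F ι : Type*} [Field F] [DecidableEq ι] {s : Finset ι} {v : ι → F}

theorem eval_eq_sum_eval_mul_prod (hvs : Set.InjOn v s) {f : F[X]} (hf : f.degree < #s) (x : F) :
    f.eval x = ∑ i ∈ s, f.eval (v i) * ∏ j ∈ s.erase i, (x - v j) / (v i - v j) := by
  conv_lhs => rw [eq_interpolate hvs hf, interpolate_apply, eval_finsetSum]
  refine sum_congr rfl fun i _ => ?_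
  simp [Lagrange.basis, basisDivisor, eval_prod, div_eq_inv_mul]

theorem eval_zero_eq_sum_eval_mul_prod (hvs : Set.InjOn v s) {f : F[X]} (hf : f.degree < #s) :
    f.eval 0 = ∑ i ∈ s, f.eval (v i) * ∏ j ∈ s.erase i, v j / (v j - v i) := by
  rw [eval_eq_sum_eval_mul_prod hvs hf 0]
  refine sum_congr rfl fun i _ => congr_arg _ (prod_congr rfl fun j _ => ?_)
  rw [zero_sub, ← neg_sub (v j), neg_div_neg_eq]

theorem sum_inv_mul_prod_eq_sum_inv (hvs : Set.InjOn v s) (hv0 : ∀ i ∈ s, v i ≠ 0) :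
    ∑ i ∈ s, (v i)⁻¹ * ∏ j ∈ s.erase i, v j / (v j - v i) = ∑ i ∈ s, (v i)⁻¹ := by
  set W : F[X] := ∏ i ∈ s, (1 - C (v i)⁻¹ * X)
  have hW : W.natDegree ≤ #s := by
    refine (natDegree_prod_le _ _).trans ?_
    refine (sum_le_card_nsmul s _ 1 fun i _ => ?_).trans_eq (by rw [smul_eq_mul, mul_one])
    compute_degree
  have hW0 : W.eval 0 = 1 := by simp [W, eval_prod]
  have hWv : ∀ i ∈ s, W.eval (v i) = 0 := fun i hi => by
    simp only [W, eval_prod]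
    exact prod_eq_zero hi (by simp [inv_mul_cancel₀ (hv0 i hi)])
  have key := eval_zero_eq_sum_eval_mul_prod hvs (degree_divX_lt_of_natDegree_le hW)
  rw [eval_zero_divX, coeff_one_prod_one_sub_C_mul_X] at key
  rw [← neg_inj, key, ← sum_neg_distrib]
  refine sum_congr rfl fun i hi => ?_
  rw [eval_divX _ (hv0 i hi), hWv i hi, hW0]
  ring

theorem coeff_one_eq_sum (hvs : Set.InjOn v s) (hv0 : ∀ i ∈ s, v i ≠ 0) {f : F[X]}
    (hf : f.natDegree ≤ #s) :
    f.coeff 1 = ∑ i ∈ s, f.eval (v i) / v i * ∏ j ∈ s.erase i, v j / (v j - v i)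
      - f.eval 0 * ∑ i ∈ s, (v i)⁻¹ := by
  rw [← eval_zero_divX, eval_zero_eq_sum_eval_mul_prod hvs (degree_divX_lt_of_natDegree_le hf),
    ← sum_inv_mul_prod_eq_sum_inv hvs hv0, mul_sum, ← sum_sub_distrib]
  refine sum_congr rfl fun i hi => ?_
  rw [eval_divX _ (hv0 i hi)]
  ring

end Lagrange

theorem stmt_5_general (N : ℕ) (p : Polynomial ℝ)
    (hp : p.natDegree ≤ 2 * N) (a : ℝ) (ha : a ≠ 0) :
    (Polynomial.derivative (Polynomial.derivative p)).eval 0 =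
      -(1 / a ^ 2) *
        (2 * p.eval 0 * ∑ l ∈ Finset.Icc 1 N, (1 : ℝ) / (l : ℝ) ^ 2
          - ∑ k ∈ Finset.Icc 1 N,
              ((p.eval ((k : ℝ) * a) + p.eval (-((k : ℝ) * a))) / (k : ℝ) ^ 2) *
                ∏ l ∈ (Finset.Icc 1 N).erase k,
                  (l : ℝ) ^ 2 / ((l : ℝ) ^ 2 - (k : ℝ) ^ 2)) := by
  set E := contract 2 (p.comp (C a * X))
  have hE : E.natDegree ≤ #(Icc 1 N) := by
    rw [Nat.card_Icc, Nat.add_sub_cancel]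
    refine natDegree_contract_two_le (natDegree_comp_le.trans ?_)
    have : (C a * X).natDegree ≤ 1 := by compute_degree
    nlinarith
  have hvs : Set.InjOn (fun k : ℕ => (k : ℝ) ^ 2) (Icc 1 N) := fun k _ l _ h => by
    simpa using h
  have hv0 : ∀ k ∈ Icc 1 N, (k : ℝ) ^ 2 ≠ 0 := fun k hk => by
    have := (mem_Icc.mp hk).1
    positivity
  have key := Lagrange.coeff_one_eq_sum hvs hv0 hE
  have hE1 : E.coeff 1 = p.coeff 2 * a ^ 2 := by simp [E, coeff_contract]
  have hE0 : E.eval 0 = p.eval 0 := by simp [E, ← coeff_zero_eq_eval_zero, coeff_contract]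
  have hEk : ∀ k : ℕ, E.eval ((k : ℝ) ^ 2) = (p.eval (k * a) + p.eval (-(k * a))) / 2 := by
    intro k
    rw [eq_div_iff two_ne_zero, mul_comm, ← eval_add_eval_neg_eq_two_mul_eval_contract]
    simp only [eval_comp, eval_mul, eval_C, eval_X, mul_neg, mul_comm (k : ℝ) a]
  simp only [hE1, hE0, hEk, div_right_comm _ (2 : ℝ), div_mul_eq_mul_div _ (2 : ℝ), ← sum_div,
    ← one_div] at key
  rw [eval_zero_derivative_derivative, eq_div_of_mul_eq (pow_ne_zero 2 ha) key]
  ring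

/-- for a real polynomial `p` of degree at most `2N` (`N ≥ 1`) and
`a ≠ 0`, the Lagrange-interpolation second-derivative formula is exact:
`p''(0) = −(1/a²)·(2 p(0) ∑_{l=1}^N 1/l² − ∑_{k=1}^N ((p(ka)+p(−ka))/k²) ∏_{l≠k} l²/(l²−k²))`. -/
theorem stmt_5 (N : ℕ) (hN : 1 ≤ N) (p : Polynomial ℝ)
    (hp : p.natDegree ≤ 2 * N) (a : ℝ) (ha : a ≠ 0) :
    (Polynomial.derivative (Polynomial.derivative p)).eval 0 =
      -(1 / a ^ 2) *
        (2 * p.eval 0 * ∑ l ∈ Finset.Icc 1 N, (1 : ℝ) / (l : ℝ) ^ 2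
          - ∑ k ∈ Finset.Icc 1 N,
              ((p.eval ((k : ℝ) * a) + p.eval (-((k : ℝ) * a))) / (k : ℝ) ^ 2) *
                ∏ l ∈ (Finset.Icc 1 N).erase k,
                  (l : ℝ) ^ 2 / ((l : ℝ) ^ 2 - (k : ℝ) ^ 2)) :=
  stmt_5_general N p hp a ha
end

section
/- Let φ : ℝ² → ℝ be smooth (C^∞) and fix (x,y) ∈ ℝ². Define the stencil sum Σ_a = −(2/15)·(φ(x,y+2a) + φ(x,y−2a) + φ(x+2a,y) + φ(x−2a,y)) − (1/10)·(φ(x+a,y+a) + φ(x−a,y+a) + φ(x+a,y−a) + φ(x−a,y−a)) + (26/15)·(φ(x+a,y) + φ(x−a,y) + φ(x,y+a) + φ(x,y−a)) − 6·φ(x,y). Then Σ_a − ( a²·Δφ(x,y) − (a⁴/20)·Δ²φ(x,y) ) is O(a⁶) as a → 0, where Δ = ∂²/∂x² + ∂²/∂y² and Δ² denotes the bilaplacian. -/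
open Asymptotics Filter Topology

/-- The two-dimensional Laplacian `Δf = ∂²f/∂x² + ∂²f/∂y²`, expressed via
iterated derivatives of the coordinate slices. -/
noncomputable def lap2 (f : ℝ × ℝ → ℝ) : ℝ × ℝ → ℝ := fun p =>
  iteratedDeriv 2 (fun s => f (s, p.2)) p.1 + iteratedDeriv 2 (fun s => f (p.1, s)) p.2

noncomputable def pd (w : ℝ × ℝ) (f : ℝ × ℝ → ℝ) : ℝ × ℝ → ℝ := fun p => fderiv ℝ f p w

lemma pd_contDiff (w : ℝ × ℝ) {f : ℝ × ℝ → ℝ} (hf : ContDiff ℝ (⊤ : ℕ∞) f) :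
    ContDiff ℝ (⊤ : ℕ∞) (pd w f) := by
  have h1 : ContDiff ℝ (⊤ : ℕ∞) (fderiv ℝ f) := hf.fderiv_right (le_refl _)
  exact (ContinuousLinearMap.apply ℝ ℝ w).contDiff.comp h1

/-- linearity in the direction, unconditionally -/
lemma pd_apply (f : ℝ × ℝ → ℝ) (u v : ℝ) (p : ℝ × ℝ) :
    pd (u, v) f p = u * pd (1, 0) f p + v * pd (0, 1) f p := by
  have : (u, v) = u • ((1:ℝ), (0:ℝ)) + v • ((0:ℝ), (1:ℝ)) := by
    simp [Prod.ext_iff]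
  rw [pd, this, map_add, map_smul, map_smul]
  simp [pd]

/-- pd of a linear combination of two functions -/
lemma pd_comb (w : ℝ × ℝ) {g h : ℝ × ℝ → ℝ} (hg : ContDiff ℝ (⊤ : ℕ∞) g) (hh : ContDiff ℝ (⊤ : ℕ∞) h)
    (a b : ℝ) :
    pd w (fun q => a * g q + b * h q) = fun p => a * pd w g p + b * pd w h p := by
  funext p
  have hg' : DifferentiableAt ℝ g p := hg.differentiable (by simp) p
  have hh' : DifferentiableAt ℝ h p := hh.differentiable (by simp) p
  have : fderiv ℝ (fun q => a * g q + b * h q) p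
      = a • fderiv ℝ g p + b • fderiv ℝ h p := by
    rw [fderiv_fun_add ((hg'.const_mul a)) ((hh'.const_mul b)),
      fderiv_const_mul hg', fderiv_const_mul hh']
  simp [pd, this]

/-- Clairaut / Schwarz for smooth functions, as equality of functions. -/
lemma pd_swap {g : ℝ × ℝ → ℝ} (hg : ContDiff ℝ (⊤ : ℕ∞) g) :
    pd (0, 1) (pd (1, 0) g) = pd (1, 0) (pd (0, 1) g) := by
  have hfd : ContDiff ℝ (⊤ : ℕ∞) (fderiv ℝ g) := hg.fderiv_right (le_refl _)
  funext p
  have hkey : ∀ w w' : ℝ × ℝ, pd w (pd w' g) p = fderiv ℝ (fderiv ℝ g) p w w' := by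
    intro w w'
    have hdiff : DifferentiableAt ℝ (fderiv ℝ g) p := hfd.differentiable (by simp) p
    have := fderiv_clm_apply (c := fderiv ℝ g) (u := fun _ => w') hdiff
      (differentiableAt_const w')
    simp only [fderiv_const_apply, Pi.zero_apply] at this
    calc pd w (pd w' g) p = fderiv ℝ (fun q => fderiv ℝ g q w') p w := rfl
      _ = fderiv ℝ (fderiv ℝ g) p w w' := by
          rw [this]; simp
  rw [hkey, hkey]
  exact (hg.contDiffAt.isSymmSndFDerivAt (by rw [minSmoothness_of_isRCLikeNormedField]; exact WithTop.coe_le_coe.2 le_top)).eq _ _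

lemma pd_iter_contDiff (w : ℝ × ℝ) {f : ℝ × ℝ → ℝ} (hf : ContDiff ℝ (⊤ : ℕ∞) f) (n : ℕ) :
    ContDiff ℝ (⊤ : ℕ∞) ((pd w)^[n] f) := by
  induction n with
  | zero => exact hf
  | succ n ih => rw [Function.iterate_succ_apply']; exact pd_contDiff w ih

lemma pd_comb4 (w : ℝ × ℝ) {g1 g2 g3 g4 : ℝ × ℝ → ℝ}
    (h1 : ContDiff ℝ (⊤ : ℕ∞) g1) (h2 : ContDiff ℝ (⊤ : ℕ∞) g2) (h3 : ContDiff ℝ (⊤ : ℕ∞) g3)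
    (h4 : ContDiff ℝ (⊤ : ℕ∞) g4) (a b c d : ℝ) :
    pd w (fun q => a * g1 q + b * g2 q + c * g3 q + d * g4 q)
      = fun p => a * pd w g1 p + b * pd w g2 p + c * pd w g3 p + d * pd w g4 p := by
  funext p
  have d1 : DifferentiableAt ℝ g1 p := h1.differentiable (by simp) p
  have d2 : DifferentiableAt ℝ g2 p := h2.differentiable (by simp) p
  have d3 : DifferentiableAt ℝ g3 p := h3.differentiable (by simp) p
  have d4 : DifferentiableAt ℝ g4 p := h4.differentiable (by simp) p
  have e1 : fderiv ℝ (fun q => a * g1 q + b * g2 q + c * g3 q + d * g4 q) p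
      = a • fderiv ℝ g1 p + b • fderiv ℝ g2 p + c • fderiv ℝ g3 p + d • fderiv ℝ g4 p := by
    rw [fderiv_fun_add (((d1.const_mul a).fun_add (d2.const_mul b)).fun_add (d3.const_mul c))
        (d4.const_mul d),
      fderiv_fun_add ((d1.const_mul a).fun_add (d2.const_mul b)) (d3.const_mul c),
      fderiv_fun_add (d1.const_mul a) (d2.const_mul b),
      fderiv_const_mul d1, fderiv_const_mul d2, fderiv_const_mul d3, fderiv_const_mul d4]
  simp [pd, e1]

lemma pd2_expand {f : ℝ × ℝ → ℝ} (hf : ContDiff ℝ (⊤ : ℕ∞) f) (u v : ℝ) (p : ℝ × ℝ) :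
    (pd (u, v))^[2] f p
      = u^2 * pd (1,0) (pd (1,0) f) p + u*v * pd (1,0) (pd (0,1) f) p
        + u*v * pd (0,1) (pd (1,0) f) p + v^2 * pd (0,1) (pd (0,1) f) p := by
  have hw : pd (u, v) f = fun q => u * pd (1,0) f q + v * pd (0,1) f q :=
    funext fun q => pd_apply f u v q
  have h1 : ContDiff ℝ (⊤ : ℕ∞) (pd (1,0) f) := pd_contDiff _ hf
  have h2 : ContDiff ℝ (⊤ : ℕ∞) (pd (0,1) f) := pd_contDiff _ hf
  show pd (u,v) (pd (u,v) f) p = _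
  rw [hw, pd_apply,
    pd_comb (1,0) h1 h2 u v, pd_comb (0,1) h1 h2 u v]
  ring

lemma pd4_expand {f : ℝ × ℝ → ℝ} (hf : ContDiff ℝ (⊤ : ℕ∞) f) (u v : ℝ) (p : ℝ × ℝ) :
    (pd (u, v))^[4] f p
      = u^4 * pd (1,0) (pd (1,0) (pd (1,0) (pd (1,0) f))) p
        + u^3*v * (pd (1,0) (pd (1,0) (pd (1,0) (pd (0,1) f))) p
            + pd (1,0) (pd (1,0) (pd (0,1) (pd (1,0) f))) p
            + pd (1,0) (pd (0,1) (pd (1,0) (pd (1,0) f))) p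
            + pd (0,1) (pd (1,0) (pd (1,0) (pd (1,0) f))) p)
        + u^2*v^2 * (pd (1,0) (pd (1,0) (pd (0,1) (pd (0,1) f))) p
            + pd (1,0) (pd (0,1) (pd (1,0) (pd (0,1) f))) p
            + pd (1,0) (pd (0,1) (pd (0,1) (pd (1,0) f))) p
            + pd (0,1) (pd (1,0) (pd (1,0) (pd (0,1) f))) p
            + pd (0,1) (pd (1,0) (pd (0,1) (pd (1,0) f))) p
            + pd (0,1) (pd (0,1) (pd (1,0) (pd (1,0) f))) p)
        + u*v^3 * (pd (0,1) (pd (0,1) (pd (0,1) (pd (1,0) f))) p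
            + pd (0,1) (pd (0,1) (pd (1,0) (pd (0,1) f))) p
            + pd (0,1) (pd (1,0) (pd (0,1) (pd (0,1) f))) p
            + pd (1,0) (pd (0,1) (pd (0,1) (pd (0,1) f))) p)
        + v^4 * pd (0,1) (pd (0,1) (pd (0,1) (pd (0,1) f))) p := by
  have hg : ContDiff ℝ (⊤ : ℕ∞) ((pd (u,v))^[2] f) := pd_iter_contDiff _ hf 2
  have hgfun : (pd (u,v))^[2] f
      = fun q => u^2 * pd (1,0) (pd (1,0) f) q + u*v * pd (1,0) (pd (0,1) f) q
        + u*v * pd (0,1) (pd (1,0) f) q + v^2 * pd (0,1) (pd (0,1) f) q :=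
    funext fun q => pd2_expand hf u v q
  have h11 : ContDiff ℝ (⊤ : ℕ∞) (pd (1,0) (pd (1,0) f)) := pd_contDiff _ (pd_contDiff _ hf)
  have h12 : ContDiff ℝ (⊤ : ℕ∞) (pd (1,0) (pd (0,1) f)) := pd_contDiff _ (pd_contDiff _ hf)
  have h21 : ContDiff ℝ (⊤ : ℕ∞) (pd (0,1) (pd (1,0) f)) := pd_contDiff _ (pd_contDiff _ hf)
  have h22 : ContDiff ℝ (⊤ : ℕ∞) (pd (0,1) (pd (0,1) f)) := pd_contDiff _ (pd_contDiff _ hf)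
  have step : (pd (u,v))^[4] f p = (pd (u,v))^[2] ((pd (u,v))^[2] f) p := by
    rw [show (4:ℕ) = 2 + 2 from rfl, Function.iterate_add_apply]
  rw [step, pd2_expand hg u v p, hgfun,
    pd_comb4 (1,0) h11 h12 h21 h22, pd_comb4 (0,1) h11 h12 h21 h22,
    pd_comb4 (1,0) (pd_contDiff _ h11) (pd_contDiff _ h12) (pd_contDiff _ h21)
      (pd_contDiff _ h22),
    pd_comb4 (0,1) (pd_contDiff _ h11) (pd_contDiff _ h12) (pd_contDiff _ h21)
      (pd_contDiff _ h22),
    pd_comb4 (1,0) (pd_contDiff _ h11) (pd_contDiff _ h12) (pd_contDiff _ h21)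
      (pd_contDiff _ h22),
    pd_comb4 (0,1) (pd_contDiff _ h11) (pd_contDiff _ h12) (pd_contDiff _ h21)
      (pd_contDiff _ h22)]
  ring

lemma line_hasDerivAt {f : ℝ × ℝ → ℝ} (hf : ContDiff ℝ (⊤ : ℕ∞) f) (p w : ℝ × ℝ) (t : ℝ) :
    HasDerivAt (fun a : ℝ => f (p + a • w)) (pd w f (p + t • w)) t := by
  have hline : HasDerivAt (fun a : ℝ => p + a • w) w t := by
    simpa using ((hasDerivAt_id t).smul_const w).const_add p
  have hfd : HasFDerivAt f (fderiv ℝ f (p + t • w)) (p + t • w) :=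
    (hf.differentiable (by simp) (p + t • w)).hasFDerivAt
  exact hfd.comp_hasDerivAt t hline

lemma line_deriv {f : ℝ × ℝ → ℝ} (hf : ContDiff ℝ (⊤ : ℕ∞) f) (p w : ℝ × ℝ) :
    deriv (fun a : ℝ => f (p + a • w)) = fun t => pd w f (p + t • w) := by
  funext t; exact (line_hasDerivAt hf p w t).deriv

lemma line_iteratedDeriv {f : ℝ × ℝ → ℝ} (hf : ContDiff ℝ (⊤ : ℕ∞) f) (p w : ℝ × ℝ) (n : ℕ) :
    ∀ t, iteratedDeriv n (fun a : ℝ => f (p + a • w)) t = ((pd w)^[n] f) (p + t • w) := by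
  induction n generalizing f with
  | zero => simp
  | succ n ih =>
    intro t
    rw [iteratedDeriv_succ', line_deriv hf p w]
    rw [ih (pd_contDiff w hf)]
    rw [Function.iterate_succ_apply]


lemma lap2_eq {f : ℝ × ℝ → ℝ} (hf : ContDiff ℝ (⊤ : ℕ∞) f) :
    lap2 f = fun p => pd (1,0) (pd (1,0) f) p + pd (0,1) (pd (0,1) f) p := by
  funext p
  have e1 : (fun s => f (s, p.2)) = fun s : ℝ => f ((0, p.2) + s • ((1:ℝ), (0:ℝ))) := by
    funext s; norm_num
  have e2 : (fun s => f (p.1, s)) = fun s : ℝ => f ((p.1, 0) + s • ((0:ℝ), (1:ℝ))) := by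
    funext s; norm_num
  have r1 := line_iteratedDeriv hf (0, p.2) ((1:ℝ), (0:ℝ)) 2 p.1
  have r2 := line_iteratedDeriv hf (p.1, 0) ((0:ℝ), (1:ℝ)) 2 p.2
  rw [lap2, e1, e2, r1, r2]
  norm_num

lemma lap2_contDiff {f : ℝ × ℝ → ℝ} (hf : ContDiff ℝ (⊤ : ℕ∞) f) : ContDiff ℝ (⊤ : ℕ∞) (lap2 f) := by
  rw [lap2_eq hf]
  exact (pd_contDiff _ (pd_contDiff _ hf)).add (pd_contDiff _ (pd_contDiff _ hf))

lemma pd_add (w : ℝ × ℝ) {g h : ℝ × ℝ → ℝ} (hg : ContDiff ℝ (⊤ : ℕ∞) g) (hh : ContDiff ℝ (⊤ : ℕ∞) h) :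
    pd w (fun q => g q + h q) = fun p => pd w g p + pd w h p := by
  funext p
  have : fderiv ℝ (fun q => g q + h q) p = fderiv ℝ g p + fderiv ℝ h p :=
    fderiv_fun_add (hg.differentiable (by simp) p) (hh.differentiable (by simp) p)
  simp [pd, this]

lemma bilap_eq {f : ℝ × ℝ → ℝ} (hf : ContDiff ℝ (⊤ : ℕ∞) f) (p : ℝ × ℝ) :
    lap2 (lap2 f) p
      = pd (1,0) (pd (1,0) (pd (1,0) (pd (1,0) f))) p
        + 2 * pd (1,0) (pd (1,0) (pd (0,1) (pd (0,1) f))) p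
        + pd (0,1) (pd (0,1) (pd (0,1) (pd (0,1) f))) p := by
  have h1 : ContDiff ℝ (⊤ : ℕ∞) (pd (1,0) f) := pd_contDiff _ hf
  have h2 : ContDiff ℝ (⊤ : ℕ∞) (pd (0,1) f) := pd_contDiff _ hf
  have h11 : ContDiff ℝ (⊤ : ℕ∞) (pd (1,0) (pd (1,0) f)) := pd_contDiff _ h1
  have h22 : ContDiff ℝ (⊤ : ℕ∞) (pd (0,1) (pd (0,1) f)) := pd_contDiff _ h2
  rw [lap2_eq (lap2_contDiff hf)]
  simp only [lap2_eq hf]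
  rw [pd_add (1,0) h11 h22, pd_add (0,1) h11 h22,
    pd_add (1,0) (pd_contDiff _ h11) (pd_contDiff _ h22),
    pd_add (0,1) (pd_contDiff _ h11) (pd_contDiff _ h22)]
  simp only [pd_swap hf, pd_swap h1, pd_swap h2,
    pd_swap h11, pd_swap h22,
    pd_swap (pd_contDiff (1,0) h2), pd_swap (pd_contDiff (0,1) h1)]
  ring

lemma norm_fderiv_real {h : ℝ → ℝ} (t : ℝ) : ‖fderiv ℝ h t‖ = ‖deriv h t‖ := by
  rw [norm_deriv_eq_norm_fderiv]

lemma mvt_step {h : ℝ → ℝ} (hh : ContDiff ℝ (⊤ : ℕ∞) h) (h0 : h 0 = 0) {n : ℕ}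
    (hd : (deriv h) =O[𝓝 (0:ℝ)] fun a => a ^ n) :
    h =O[𝓝 (0:ℝ)] fun a => a ^ (n + 1) := by
  rw [isBigO_iff] at hd ⊢
  obtain ⟨C, hC⟩ := hd
  rw [Metric.eventually_nhds_iff] at hC
  obtain ⟨ε, hε, hball⟩ := hC
  refine ⟨|C|, Metric.eventually_nhds_iff.2 ⟨ε, hε, fun {a} ha => ?_⟩⟩
  have hseg : ∀ t ∈ segment ℝ (0:ℝ) a, ‖t‖ ≤ ‖a‖ := by
    intro t ht
    obtain ⟨θ, η, hθ, hη, hsum, rfl⟩ := ht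
    simp only [smul_eq_mul, mul_zero, zero_add]
    rw [norm_mul]
    calc ‖η‖ * ‖a‖ ≤ 1 * ‖a‖ := by
          apply mul_le_mul_of_nonneg_right _ (norm_nonneg a)
          rw [Real.norm_eq_abs, abs_of_nonneg hη]; linarith
      _ = ‖a‖ := one_mul _
  have hbound : ∀ t ∈ segment ℝ (0:ℝ) a, ‖fderiv ℝ h t‖ ≤ |C| * ‖a‖ ^ n := by
    intro t ht
    have hta : ‖t‖ ≤ ‖a‖ := hseg t ht
    have htb : dist t 0 < ε := by
      rw [dist_zero_right]
      calc ‖t‖ ≤ ‖a‖ := hta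
        _ = dist a 0 := (dist_zero_right a).symm
        _ < ε := ha
    have := hball htb
    rw [norm_fderiv_real]
    calc ‖deriv h t‖ ≤ C * ‖t ^ n‖ := this
      _ ≤ |C| * ‖t ^ n‖ := mul_le_mul_of_nonneg_right (le_abs_self C) (norm_nonneg _)
      _ ≤ |C| * ‖a‖ ^ n := by
          rw [norm_pow]
          exact mul_le_mul_of_nonneg_left (pow_le_pow_left₀ (norm_nonneg t) hta n) (abs_nonneg C)
  have key := (convex_segment (0:ℝ) a).norm_image_sub_le_of_norm_fderiv_le
    (fun t _ => hh.differentiable (by simp) t)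
    hbound (left_mem_segment ℝ 0 a) (right_mem_segment ℝ 0 a)
  rw [h0, sub_zero, sub_zero] at key
  calc ‖h a‖ ≤ |C| * ‖a‖ ^ n * ‖a‖ := key
    _ = |C| * ‖a ^ (n+1)‖ := by rw [norm_pow]; ring

lemma bigO_of_derivs_vanish :
    ∀ (n : ℕ) (h : ℝ → ℝ), ContDiff ℝ (⊤ : ℕ∞) h → (∀ k ≤ n, iteratedDeriv k h 0 = 0) →
      h =O[𝓝 (0:ℝ)] fun a => a ^ (n + 1) := by
  intro n
  induction n with
  | zero =>
    intro h hh hd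
    have h0 : h 0 = 0 := by simpa using hd 0 le_rfl
    have := ((hh.differentiable (by simp) 0).hasFDerivAt).isBigO_sub
    simp only [h0, sub_zero] at this
    simpa using this
  | succ n ih =>
    intro h hh hd
    have hder : (deriv h) =O[𝓝 (0:ℝ)] fun a => a ^ (n + 1) := by
      have hd1 : ContDiff ℝ (⊤ : ℕ∞) (deriv h) := by
        have := contDiff_infty_iff_deriv.1 hh
        exact this.2
      apply ih (deriv h) hd1
      intro k hk
      rw [← iteratedDeriv_succ']
      exact hd (k + 1) (by omega)
    exact mvt_step hh (by simpa using hd 0 (by omega)) hder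

lemma odd_itd_vanish {h : ℝ → ℝ} (hh : ContDiff ℝ (⊤ : ℕ∞) h) (heven : ∀ a, h (-a) = h a)
    {k : ℕ} (hk : Odd k) : iteratedDeriv k h 0 = 0 := by
  have hc : ContDiff ℝ (k : WithTop ℕ∞) h := hh.of_le (by exact_mod_cast le_top)
  have := iteratedDeriv_comp_const_smul (f := h) (n := k) hc (-1)
  have he : (fun x : ℝ => h (-1 * x)) = h := by
    funext a; rw [show (-1 : ℝ) * a = -a by ring, heven]
  rw [he] at this
  have h0 := congrFun this 0
  rw [mul_zero] at h0
  rw [hk.neg_one_pow, neg_one_smul] at h0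
  linarith

lemma itd_add {f g : ℝ → ℝ} (hf : ContDiff ℝ (⊤ : ℕ∞) f) (hg : ContDiff ℝ (⊤ : ℕ∞) g) (n : ℕ) (x : ℝ) :
    iteratedDeriv n (fun a => f a + g a) x = iteratedDeriv n f x + iteratedDeriv n g x := by
  have : (fun a => f a + g a) = f + g := rfl
  rw [this, ← iteratedDerivWithin_univ, ← iteratedDerivWithin_univ (f := f),
    ← iteratedDerivWithin_univ (f := g)]
  exact iteratedDerivWithin_add (Set.mem_univ x) uniqueDiffOn_univ
    ((hf.of_le (by exact_mod_cast le_top) : ContDiff ℝ (n:WithTop ℕ∞) f).contDiffWithinAt)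
    ((hg.of_le (by exact_mod_cast le_top) : ContDiff ℝ (n:WithTop ℕ∞) g).contDiffWithinAt)

lemma itd_cmul {f : ℝ → ℝ} (hf : ContDiff ℝ (⊤ : ℕ∞) f) (c : ℝ) (n : ℕ) (x : ℝ) :
    iteratedDeriv n (fun a => c * f a) x = c * iteratedDeriv n f x := by
  rw [← iteratedDerivWithin_univ, ← iteratedDerivWithin_univ (f := f)]
  exact iteratedDerivWithin_const_mul (Set.mem_univ x) uniqueDiffOn_univ c
    ((hf.of_le (by exact_mod_cast le_top) : ContDiff ℝ (n:WithTop ℕ∞) f).contDiffWithinAt)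

lemma Q_contDiff (L M : ℝ) : ContDiff ℝ (⊤ : ℕ∞) (fun a : ℝ => a^2 * L - a^4 * M) := by
  fun_prop

lemma Q_itd (L M : ℝ) :
    iteratedDeriv 0 (fun a : ℝ => a^2 * L - a^4 * M) 0 = 0 ∧
    iteratedDeriv 2 (fun a : ℝ => a^2 * L - a^4 * M) 0 = 2 * L ∧
    iteratedDeriv 4 (fun a : ℝ => a^2 * L - a^4 * M) 0 = -24 * M := by
  have d0 : deriv (fun a : ℝ => a^2 * L - a^4 * M) = (fun a : ℝ => 2*a * L - 4*a^3 * M) := by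
    funext a
    rw [(((hasDerivAt_pow 2 a).mul_const L).fun_sub ((hasDerivAt_pow 4 a).mul_const M)).deriv]
    push_cast; ring
  have d1 : deriv (fun a : ℝ => 2*a * L - 4*a^3 * M) = (fun a : ℝ => 2 * L - 12*a^2 * M) := by
    funext a
    rw [(((hasDerivAt_id' a).const_mul 2).mul_const L).fun_sub
      (((hasDerivAt_pow 3 a).const_mul 4).mul_const M) |>.deriv]
    push_cast; ring
  have d2 : deriv (fun a : ℝ => 2 * L - 12*a^2 * M) = (fun a : ℝ => -(24*a) * M) := by
    funext a
    rw [((hasDerivAt_const a (2*L)).fun_sub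
      (((hasDerivAt_pow 2 a).const_mul 12).mul_const M)).deriv]
    push_cast; ring
  have d3 : deriv (fun a : ℝ => -(24*a) * M) = (fun _ : ℝ => -24 * M) := by
    funext a
    rw [(((hasDerivAt_id' a).const_mul 24).fun_neg.mul_const M).deriv]
    ring
  refine ⟨by simp [iteratedDeriv_zero], ?_, ?_⟩
  · rw [show (2:ℕ) = 0 + 1 + 1 from rfl, iteratedDeriv_succ, iteratedDeriv_succ,
      iteratedDeriv_zero, d0, d1]
    norm_num
  · rw [show (4:ℕ) = 0 + 1 + 1 + 1 + 1 from rfl, iteratedDeriv_succ, iteratedDeriv_succ,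
      iteratedDeriv_succ, iteratedDeriv_succ, iteratedDeriv_zero, d0, d1, d2, d3]


lemma itd_cmul_add {f g : ℝ → ℝ} (hf : ContDiff ℝ (⊤ : ℕ∞) f) (hg : ContDiff ℝ (⊤ : ℕ∞) g)
    (c : ℝ) (n : ℕ) (x : ℝ) :
    iteratedDeriv n (fun a => c * f a + g a) x
      = c * iteratedDeriv n f x + iteratedDeriv n g x := by
  rw [itd_add ((contDiff_const.mul hf)) hg, itd_cmul hf]

lemma stencil_core (φ : ℝ × ℝ → ℝ) (hφ : ContDiff ℝ (⊤ : ℕ∞) φ) (x y : ℝ) :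
    (fun a : ℝ => (-(2/15)) * φ ((x, y) + a • ((0:ℝ), (2:ℝ))) + ((-(2/15)) * φ ((x, y) + a • ((0:ℝ), (-2:ℝ))) + ((-(2/15)) * φ ((x, y) + a • ((2:ℝ), (0:ℝ))) + ((-(2/15)) * φ ((x, y) + a • ((-2:ℝ), (0:ℝ))) + ((-(1/10)) * φ ((x, y) + a • ((1:ℝ), (1:ℝ))) + ((-(1/10)) * φ ((x, y) + a • ((-1:ℝ), (1:ℝ))) + ((-(1/10)) * φ ((x, y) + a • ((1:ℝ), (-1:ℝ))) + ((-(1/10)) * φ ((x, y) + a • ((-1:ℝ), (-1:ℝ))) + ((26/15) * φ ((x, y) + a • ((1:ℝ), (0:ℝ))) + ((26/15) * φ ((x, y) + a • ((-1:ℝ), (0:ℝ))) + ((26/15) * φ ((x, y) + a • ((0:ℝ), (1:ℝ))) + ((26/15) * φ ((x, y) + a • ((0:ℝ), (-1:ℝ))) + ((-6) * φ ((x, y) + a • ((0:ℝ), (0:ℝ))) + (a ^ 2 * (-(lap2 φ (x, y))) - a ^ 4 * (-(lap2 (lap2 φ) (x, y) / 20))))))))))))))))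
      =O[𝓝 (0:ℝ)] fun a : ℝ => a ^ 6 := by
  have hL := lap2_eq hφ
  have h1 : ContDiff ℝ (⊤ : ℕ∞) (pd (1,0) φ) := pd_contDiff _ hφ
  have h2 : ContDiff ℝ (⊤ : ℕ∞) (pd (0,1) φ) := pd_contDiff _ hφ
  have h11 : ContDiff ℝ (⊤ : ℕ∞) (pd (1,0) (pd (1,0) φ)) := pd_contDiff _ h1
  have h12 : ContDiff ℝ (⊤ : ℕ∞) (pd (1,0) (pd (0,1) φ)) := pd_contDiff _ h2
  have h21 : ContDiff ℝ (⊤ : ℕ∞) (pd (0,1) (pd (1,0) φ)) := pd_contDiff _ h1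
  have h22 : ContDiff ℝ (⊤ : ℕ∞) (pd (0,1) (pd (0,1) φ)) := pd_contDiff _ h2
  have ht1 : ContDiff ℝ (⊤ : ℕ∞) (fun a : ℝ => φ ((x, y) + a • ((0:ℝ), (2:ℝ)))) :=
    hφ.comp (contDiff_const.add (contDiff_id.smul contDiff_const))
  have ht2 : ContDiff ℝ (⊤ : ℕ∞) (fun a : ℝ => φ ((x, y) + a • ((0:ℝ), (-2:ℝ)))) :=
    hφ.comp (contDiff_const.add (contDiff_id.smul contDiff_const))
  have ht3 : ContDiff ℝ (⊤ : ℕ∞) (fun a : ℝ => φ ((x, y) + a • ((2:ℝ), (0:ℝ)))) :=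
    hφ.comp (contDiff_const.add (contDiff_id.smul contDiff_const))
  have ht4 : ContDiff ℝ (⊤ : ℕ∞) (fun a : ℝ => φ ((x, y) + a • ((-2:ℝ), (0:ℝ)))) :=
    hφ.comp (contDiff_const.add (contDiff_id.smul contDiff_const))
  have ht5 : ContDiff ℝ (⊤ : ℕ∞) (fun a : ℝ => φ ((x, y) + a • ((1:ℝ), (1:ℝ)))) :=
    hφ.comp (contDiff_const.add (contDiff_id.smul contDiff_const))
  have ht6 : ContDiff ℝ (⊤ : ℕ∞) (fun a : ℝ => φ ((x, y) + a • ((-1:ℝ), (1:ℝ)))) :=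
    hφ.comp (contDiff_const.add (contDiff_id.smul contDiff_const))
  have ht7 : ContDiff ℝ (⊤ : ℕ∞) (fun a : ℝ => φ ((x, y) + a • ((1:ℝ), (-1:ℝ)))) :=
    hφ.comp (contDiff_const.add (contDiff_id.smul contDiff_const))
  have ht8 : ContDiff ℝ (⊤ : ℕ∞) (fun a : ℝ => φ ((x, y) + a • ((-1:ℝ), (-1:ℝ)))) :=
    hφ.comp (contDiff_const.add (contDiff_id.smul contDiff_const))
  have ht9 : ContDiff ℝ (⊤ : ℕ∞) (fun a : ℝ => φ ((x, y) + a • ((1:ℝ), (0:ℝ)))) :=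
    hφ.comp (contDiff_const.add (contDiff_id.smul contDiff_const))
  have ht10 : ContDiff ℝ (⊤ : ℕ∞) (fun a : ℝ => φ ((x, y) + a • ((-1:ℝ), (0:ℝ)))) :=
    hφ.comp (contDiff_const.add (contDiff_id.smul contDiff_const))
  have ht11 : ContDiff ℝ (⊤ : ℕ∞) (fun a : ℝ => φ ((x, y) + a • ((0:ℝ), (1:ℝ)))) :=
    hφ.comp (contDiff_const.add (contDiff_id.smul contDiff_const))
  have ht12 : ContDiff ℝ (⊤ : ℕ∞) (fun a : ℝ => φ ((x, y) + a • ((0:ℝ), (-1:ℝ)))) :=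
    hφ.comp (contDiff_const.add (contDiff_id.smul contDiff_const))
  have ht13 : ContDiff ℝ (⊤ : ℕ∞) (fun a : ℝ => φ ((x, y) + a • ((0:ℝ), (0:ℝ)))) :=
    hφ.comp (contDiff_const.add (contDiff_id.smul contDiff_const))
  have htR : ContDiff ℝ (⊤ : ℕ∞) (fun a : ℝ => (a ^ 2 * (-(lap2 φ (x, y))) - a ^ 4 * (-(lap2 (lap2 φ) (x, y) / 20)))) :=
    Q_contDiff _ _
  have htail13 : ContDiff ℝ (⊤ : ℕ∞) (fun a : ℝ => (-6) * φ ((x, y) + a • ((0:ℝ), (0:ℝ))) + (a ^ 2 * (-(lap2 φ (x, y))) - a ^ 4 * (-(lap2 (lap2 φ) (x, y) / 20)))) :=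
    (contDiff_const.mul ht13).add htR
  have htail12 : ContDiff ℝ (⊤ : ℕ∞) (fun a : ℝ => (26/15) * φ ((x, y) + a • ((0:ℝ), (-1:ℝ))) + ((-6) * φ ((x, y) + a • ((0:ℝ), (0:ℝ))) + (a ^ 2 * (-(lap2 φ (x, y))) - a ^ 4 * (-(lap2 (lap2 φ) (x, y) / 20))))) :=
    (contDiff_const.mul ht12).add htail13
  have htail11 : ContDiff ℝ (⊤ : ℕ∞) (fun a : ℝ => (26/15) * φ ((x, y) + a • ((0:ℝ), (1:ℝ))) + ((26/15) * φ ((x, y) + a • ((0:ℝ), (-1:ℝ))) + ((-6) * φ ((x, y) + a • ((0:ℝ), (0:ℝ))) + (a ^ 2 * (-(lap2 φ (x, y))) - a ^ 4 * (-(lap2 (lap2 φ) (x, y) / 20)))))) :=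
    (contDiff_const.mul ht11).add htail12
  have htail10 : ContDiff ℝ (⊤ : ℕ∞) (fun a : ℝ => (26/15) * φ ((x, y) + a • ((-1:ℝ), (0:ℝ))) + ((26/15) * φ ((x, y) + a • ((0:ℝ), (1:ℝ))) + ((26/15) * φ ((x, y) + a • ((0:ℝ), (-1:ℝ))) + ((-6) * φ ((x, y) + a • ((0:ℝ), (0:ℝ))) + (a ^ 2 * (-(lap2 φ (x, y))) - a ^ 4 * (-(lap2 (lap2 φ) (x, y) / 20))))))) :=
    (contDiff_const.mul ht10).add htail11
  have htail9 : ContDiff ℝ (⊤ : ℕ∞) (fun a : ℝ => (26/15) * φ ((x, y) + a • ((1:ℝ), (0:ℝ))) + ((26/15) * φ ((x, y) + a • ((-1:ℝ), (0:ℝ))) + ((26/15) * φ ((x, y) + a • ((0:ℝ), (1:ℝ))) + ((26/15) * φ ((x, y) + a • ((0:ℝ), (-1:ℝ))) + ((-6) * φ ((x, y) + a • ((0:ℝ), (0:ℝ))) + (a ^ 2 * (-(lap2 φ (x, y))) - a ^ 4 * (-(lap2 (lap2 φ) (x, y) / 20)))))))) :=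
    (contDiff_const.mul ht9).add htail10
  have htail8 : ContDiff ℝ (⊤ : ℕ∞) (fun a : ℝ => (-(1/10)) * φ ((x, y) + a • ((-1:ℝ), (-1:ℝ))) + ((26/15) * φ ((x, y) + a • ((1:ℝ), (0:ℝ))) + ((26/15) * φ ((x, y) + a • ((-1:ℝ), (0:ℝ))) + ((26/15) * φ ((x, y) + a • ((0:ℝ), (1:ℝ))) + ((26/15) * φ ((x, y) + a • ((0:ℝ), (-1:ℝ))) + ((-6) * φ ((x, y) + a • ((0:ℝ), (0:ℝ))) + (a ^ 2 * (-(lap2 φ (x, y))) - a ^ 4 * (-(lap2 (lap2 φ) (x, y) / 20))))))))) :=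
    (contDiff_const.mul ht8).add htail9
  have htail7 : ContDiff ℝ (⊤ : ℕ∞) (fun a : ℝ => (-(1/10)) * φ ((x, y) + a • ((1:ℝ), (-1:ℝ))) + ((-(1/10)) * φ ((x, y) + a • ((-1:ℝ), (-1:ℝ))) + ((26/15) * φ ((x, y) + a • ((1:ℝ), (0:ℝ))) + ((26/15) * φ ((x, y) + a • ((-1:ℝ), (0:ℝ))) + ((26/15) * φ ((x, y) + a • ((0:ℝ), (1:ℝ))) + ((26/15) * φ ((x, y) + a • ((0:ℝ), (-1:ℝ))) + ((-6) * φ ((x, y) + a • ((0:ℝ), (0:ℝ))) + (a ^ 2 * (-(lap2 φ (x, y))) - a ^ 4 * (-(lap2 (lap2 φ) (x, y) / 20)))))))))) :=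
    (contDiff_const.mul ht7).add htail8
  have htail6 : ContDiff ℝ (⊤ : ℕ∞) (fun a : ℝ => (-(1/10)) * φ ((x, y) + a • ((-1:ℝ), (1:ℝ))) + ((-(1/10)) * φ ((x, y) + a • ((1:ℝ), (-1:ℝ))) + ((-(1/10)) * φ ((x, y) + a • ((-1:ℝ), (-1:ℝ))) + ((26/15) * φ ((x, y) + a • ((1:ℝ), (0:ℝ))) + ((26/15) * φ ((x, y) + a • ((-1:ℝ), (0:ℝ))) + ((26/15) * φ ((x, y) + a • ((0:ℝ), (1:ℝ))) + ((26/15) * φ ((x, y) + a • ((0:ℝ), (-1:ℝ))) + ((-6) * φ ((x, y) + a • ((0:ℝ), (0:ℝ))) + (a ^ 2 * (-(lap2 φ (x, y))) - a ^ 4 * (-(lap2 (lap2 φ) (x, y) / 20))))))))))) :=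
    (contDiff_const.mul ht6).add htail7
  have htail5 : ContDiff ℝ (⊤ : ℕ∞) (fun a : ℝ => (-(1/10)) * φ ((x, y) + a • ((1:ℝ), (1:ℝ))) + ((-(1/10)) * φ ((x, y) + a • ((-1:ℝ), (1:ℝ))) + ((-(1/10)) * φ ((x, y) + a • ((1:ℝ), (-1:ℝ))) + ((-(1/10)) * φ ((x, y) + a • ((-1:ℝ), (-1:ℝ))) + ((26/15) * φ ((x, y) + a • ((1:ℝ), (0:ℝ))) + ((26/15) * φ ((x, y) + a • ((-1:ℝ), (0:ℝ))) + ((26/15) * φ ((x, y) + a • ((0:ℝ), (1:ℝ))) + ((26/15) * φ ((x, y) + a • ((0:ℝ), (-1:ℝ))) + ((-6) * φ ((x, y) + a • ((0:ℝ), (0:ℝ))) + (a ^ 2 * (-(lap2 φ (x, y))) - a ^ 4 * (-(lap2 (lap2 φ) (x, y) / 20)))))))))))) :=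
    (contDiff_const.mul ht5).add htail6
  have htail4 : ContDiff ℝ (⊤ : ℕ∞) (fun a : ℝ => (-(2/15)) * φ ((x, y) + a • ((-2:ℝ), (0:ℝ))) + ((-(1/10)) * φ ((x, y) + a • ((1:ℝ), (1:ℝ))) + ((-(1/10)) * φ ((x, y) + a • ((-1:ℝ), (1:ℝ))) + ((-(1/10)) * φ ((x, y) + a • ((1:ℝ), (-1:ℝ))) + ((-(1/10)) * φ ((x, y) + a • ((-1:ℝ), (-1:ℝ))) + ((26/15) * φ ((x, y) + a • ((1:ℝ), (0:ℝ))) + ((26/15) * φ ((x, y) + a • ((-1:ℝ), (0:ℝ))) + ((26/15) * φ ((x, y) + a • ((0:ℝ), (1:ℝ))) + ((26/15) * φ ((x, y) + a • ((0:ℝ), (-1:ℝ))) + ((-6) * φ ((x, y) + a • ((0:ℝ), (0:ℝ))) + (a ^ 2 * (-(lap2 φ (x, y))) - a ^ 4 * (-(lap2 (lap2 φ) (x, y) / 20))))))))))))) :=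
    (contDiff_const.mul ht4).add htail5
  have htail3 : ContDiff ℝ (⊤ : ℕ∞) (fun a : ℝ => (-(2/15)) * φ ((x, y) + a • ((2:ℝ), (0:ℝ))) + ((-(2/15)) * φ ((x, y) + a • ((-2:ℝ), (0:ℝ))) + ((-(1/10)) * φ ((x, y) + a • ((1:ℝ), (1:ℝ))) + ((-(1/10)) * φ ((x, y) + a • ((-1:ℝ), (1:ℝ))) + ((-(1/10)) * φ ((x, y) + a • ((1:ℝ), (-1:ℝ))) + ((-(1/10)) * φ ((x, y) + a • ((-1:ℝ), (-1:ℝ))) + ((26/15) * φ ((x, y) + a • ((1:ℝ), (0:ℝ))) + ((26/15) * φ ((x, y) + a • ((-1:ℝ), (0:ℝ))) + ((26/15) * φ ((x, y) + a • ((0:ℝ), (1:ℝ))) + ((26/15) * φ ((x, y) + a • ((0:ℝ), (-1:ℝ))) + ((-6) * φ ((x, y) + a • ((0:ℝ), (0:ℝ))) + (a ^ 2 * (-(lap2 φ (x, y))) - a ^ 4 * (-(lap2 (lap2 φ) (x, y) / 20)))))))))))))) :=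
    (contDiff_const.mul ht3).add htail4
  have htail2 : ContDiff ℝ (⊤ : ℕ∞) (fun a : ℝ => (-(2/15)) * φ ((x, y) + a • ((0:ℝ), (-2:ℝ))) + ((-(2/15)) * φ ((x, y) + a • ((2:ℝ), (0:ℝ))) + ((-(2/15)) * φ ((x, y) + a • ((-2:ℝ), (0:ℝ))) + ((-(1/10)) * φ ((x, y) + a • ((1:ℝ), (1:ℝ))) + ((-(1/10)) * φ ((x, y) + a • ((-1:ℝ), (1:ℝ))) + ((-(1/10)) * φ ((x, y) + a • ((1:ℝ), (-1:ℝ))) + ((-(1/10)) * φ ((x, y) + a • ((-1:ℝ), (-1:ℝ))) + ((26/15) * φ ((x, y) + a • ((1:ℝ), (0:ℝ))) + ((26/15) * φ ((x, y) + a • ((-1:ℝ), (0:ℝ))) + ((26/15) * φ ((x, y) + a • ((0:ℝ), (1:ℝ))) + ((26/15) * φ ((x, y) + a • ((0:ℝ), (-1:ℝ))) + ((-6) * φ ((x, y) + a • ((0:ℝ), (0:ℝ))) + (a ^ 2 * (-(lap2 φ (x, y))) - a ^ 4 * (-(lap2 (lap2 φ) (x, y) / 20))))))))))))))) :=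
    (contDiff_const.mul ht2).add htail3
  have htail1 : ContDiff ℝ (⊤ : ℕ∞) (fun a : ℝ => (-(2/15)) * φ ((x, y) + a • ((0:ℝ), (2:ℝ))) + ((-(2/15)) * φ ((x, y) + a • ((0:ℝ), (-2:ℝ))) + ((-(2/15)) * φ ((x, y) + a • ((2:ℝ), (0:ℝ))) + ((-(2/15)) * φ ((x, y) + a • ((-2:ℝ), (0:ℝ))) + ((-(1/10)) * φ ((x, y) + a • ((1:ℝ), (1:ℝ))) + ((-(1/10)) * φ ((x, y) + a • ((-1:ℝ), (1:ℝ))) + ((-(1/10)) * φ ((x, y) + a • ((1:ℝ), (-1:ℝ))) + ((-(1/10)) * φ ((x, y) + a • ((-1:ℝ), (-1:ℝ))) + ((26/15) * φ ((x, y) + a • ((1:ℝ), (0:ℝ))) + ((26/15) * φ ((x, y) + a • ((-1:ℝ), (0:ℝ))) + ((26/15) * φ ((x, y) + a • ((0:ℝ), (1:ℝ))) + ((26/15) * φ ((x, y) + a • ((0:ℝ), (-1:ℝ))) + ((-6) * φ ((x, y) + a • ((0:ℝ), (0:ℝ))) + (a ^ 2 * (-(lap2 φ (x, y))) - a ^ 4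 * (-(lap2 (lap2 φ) (x, y) / 20)))))))))))))))) :=
    (contDiff_const.mul ht1).add htail2
  have hcont : ContDiff ℝ (⊤ : ℕ∞) (fun a : ℝ => (-(2/15)) * φ ((x, y) + a • ((0:ℝ), (2:ℝ))) + ((-(2/15)) * φ ((x, y) + a • ((0:ℝ), (-2:ℝ))) + ((-(2/15)) * φ ((x, y) + a • ((2:ℝ), (0:ℝ))) + ((-(2/15)) * φ ((x, y) + a • ((-2:ℝ), (0:ℝ))) + ((-(1/10)) * φ ((x, y) + a • ((1:ℝ), (1:ℝ))) + ((-(1/10)) * φ ((x, y) + a • ((-1:ℝ), (1:ℝ))) + ((-(1/10)) * φ ((x, y) + a • ((1:ℝ), (-1:ℝ))) + ((-(1/10)) * φ ((x, y) + a • ((-1:ℝ), (-1:ℝ))) + ((26/15) * φ ((x, y) + a • ((1:ℝ), (0:ℝ))) + ((26/15) * φ ((x, y) + a • ((-1:ℝ), (0:ℝ))) + ((26/15) * φ ((x, y) + a • ((0:ℝ), (1:ℝ))) + ((26/15) * φ ((x, y) + a • ((0:ℝ), (-1:ℝ))) + ((-6) * φ ((x, y) + a • ((0:ℝ), (0:ℝ)))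 + (a ^ 2 * (-(lap2 φ (x, y))) - a ^ 4 * (-(lap2 (lap2 φ) (x, y) / 20)))))))))))))))) := htail1
  have heven : ∀ a : ℝ, (fun a : ℝ => (-(2/15)) * φ ((x, y) + a • ((0:ℝ), (2:ℝ))) + ((-(2/15)) * φ ((x, y) + a • ((0:ℝ), (-2:ℝ))) + ((-(2/15)) * φ ((x, y) + a • ((2:ℝ), (0:ℝ))) + ((-(2/15)) * φ ((x, y) + a • ((-2:ℝ), (0:ℝ))) + ((-(1/10)) * φ ((x, y) + a • ((1:ℝ), (1:ℝ))) + ((-(1/10)) * φ ((x, y) + a • ((-1:ℝ), (1:ℝ))) + ((-(1/10)) * φ ((x, y) + a • ((1:ℝ), (-1:ℝ))) + ((-(1/10)) * φ ((x, y) + a • ((-1:ℝ), (-1:ℝ))) + ((26/15) * φ ((x, y) + a • ((1:ℝ), (0:ℝ))) + ((26/15) * φ ((x, y) + a • ((-1:ℝ), (0:ℝ))) + ((26/15) * φ ((x, y) + a • ((0:ℝ), (1:ℝ))) + ((26/15) * φ ((x, y) + a • ((0:ℝ), (-1:ℝ))) + ((-6) * φ ((x, y) + a • ((0:ℝ), (0:ℝ)))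 + (a ^ 2 * (-(lap2 φ (x, y))) - a ^ 4 * (-(lap2 (lap2 φ) (x, y) / 20)))))))))))))))) (-a) = (fun a : ℝ => (-(2/15)) * φ ((x, y) + a • ((0:ℝ), (2:ℝ))) + ((-(2/15)) * φ ((x, y) + a • ((0:ℝ), (-2:ℝ))) + ((-(2/15)) * φ ((x, y) + a • ((2:ℝ), (0:ℝ))) + ((-(2/15)) * φ ((x, y) + a • ((-2:ℝ), (0:ℝ))) + ((-(1/10)) * φ ((x, y) + a • ((1:ℝ), (1:ℝ))) + ((-(1/10)) * φ ((x, y) + a • ((-1:ℝ), (1:ℝ))) + ((-(1/10)) * φ ((x, y) + a • ((1:ℝ), (-1:ℝ))) + ((-(1/10)) * φ ((x, y) + a • ((-1:ℝ), (-1:ℝ))) + ((26/15) * φ ((x, y) + a • ((1:ℝ), (0:ℝ))) + ((26/15) * φ ((x, y) + a • ((-1:ℝ), (0:ℝ))) + ((26/15) * φ ((x, y) + a • ((0:ℝ), (1:ℝ))) + ((26/15) * φ ((x, y) + a • ((0:ℝ), (-1:ℝ))) + ((-6) * φ ((x, y) + a • ((0:ℝ), (0:ℝ))) + (a ^ 2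 * (-(lap2 φ (x, y))) - a ^ 4 * (-(lap2 (lap2 φ) (x, y) / 20)))))))))))))))) a := by
    intro a
    simp only [Prod.smul_mk, Prod.mk_add_mk, smul_eq_mul]
    norm_num
    ring_nf
  have hline : ∀ (w : ℝ × ℝ) (k : ℕ), iteratedDeriv k (fun a : ℝ => φ ((x, y) + a • w)) 0
      = ((pd w)^[k] φ) (x, y) := by
    intro w k
    rw [line_iteratedDeriv hφ]
    norm_num
  obtain ⟨q0, q2, q4⟩ := Q_itd (-(lap2 φ (x, y))) (-(lap2 (lap2 φ) (x, y) / 20))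
  have hvan : ∀ k ≤ 5, iteratedDeriv k (fun a : ℝ => (-(2/15)) * φ ((x, y) + a • ((0:ℝ), (2:ℝ))) + ((-(2/15)) * φ ((x, y) + a • ((0:ℝ), (-2:ℝ))) + ((-(2/15)) * φ ((x, y) + a • ((2:ℝ), (0:ℝ))) + ((-(2/15)) * φ ((x, y) + a • ((-2:ℝ), (0:ℝ))) + ((-(1/10)) * φ ((x, y) + a • ((1:ℝ), (1:ℝ))) + ((-(1/10)) * φ ((x, y) + a • ((-1:ℝ), (1:ℝ))) + ((-(1/10)) * φ ((x, y) + a • ((1:ℝ), (-1:ℝ))) + ((-(1/10)) * φ ((x, y) + a • ((-1:ℝ), (-1:ℝ))) + ((26/15) * φ ((x, y) + a • ((1:ℝ), (0:ℝ))) + ((26/15) * φ ((x, y) + a • ((-1:ℝ), (0:ℝ))) + ((26/15) * φ ((x, y) + a • ((0:ℝ), (1:ℝ))) + ((26/15) * φ ((x, y) + a • ((0:ℝ), (-1:ℝ))) + ((-6) * φ ((x, y) + a • ((0:ℝ), (0:ℝ))) + (a ^ 2 * (-(lap2 φ (x, y))) - a ^ 4 * (-(lap2 (lap2 φ) (x,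 y) / 20)))))))))))))))) 0 = 0 := by
    intro k hk
    interval_cases k
    · simp only [iteratedDeriv_zero]
      norm_num
      ring
    · exact odd_itd_vanish hcont heven ⟨0, by norm_num⟩
    · rw [itd_cmul_add ht1 htail2, itd_cmul_add ht2 htail3, itd_cmul_add ht3 htail4, itd_cmul_add ht4 htail5, itd_cmul_add ht5 htail6, itd_cmul_add ht6 htail7, itd_cmul_add ht7 htail8, itd_cmul_add ht8 htail9, itd_cmul_add ht9 htail10, itd_cmul_add ht10 htail11, itd_cmul_add ht11 htail12, itd_cmul_add ht12 htail13,
        itd_cmul_add ht13 htR]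
      simp only [hline, q2, pd2_expand hφ]
      simp only [hL]
      ring
    · exact odd_itd_vanish hcont heven ⟨1, by norm_num⟩
    · rw [itd_cmul_add ht1 htail2, itd_cmul_add ht2 htail3, itd_cmul_add ht3 htail4, itd_cmul_add ht4 htail5, itd_cmul_add ht5 htail6, itd_cmul_add ht6 htail7, itd_cmul_add ht7 htail8, itd_cmul_add ht8 htail9, itd_cmul_add ht9 htail10, itd_cmul_add ht10 htail11, itd_cmul_add ht11 htail12, itd_cmul_add ht12 htail13,
        itd_cmul_add ht13 htR]
      simp only [hline, q4, pd4_expand hφ]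
      simp only [pd_swap hφ, pd_swap h1, pd_swap h2, pd_swap h11, pd_swap h12, pd_swap h21,
        pd_swap h22]
      simp only [bilap_eq hφ]
      ring
    · exact odd_itd_vanish hcont heven ⟨2, by norm_num⟩
  exact bigO_of_derivs_vanish 5 _ hcont hvan

/-- for smooth `φ : ℝ² → ℝ`, the stencil sum `Σ_a` satisfies
`Σ_a − (a²·Δφ(x,y) − (a⁴/20)·Δ²φ(x,y)) = O(a⁶)` as `a → 0`. -/
theorem stmt_6 (φ : ℝ × ℝ → ℝ) (hφ : ContDiff ℝ (⊤ : ℕ∞) φ) (x y : ℝ) :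
    (fun a : ℝ =>
        (-(2 / 15) * (φ (x, y + 2 * a) + φ (x, y - 2 * a)
            + φ (x + 2 * a, y) + φ (x - 2 * a, y))
          - (1 / 10) * (φ (x + a, y + a) + φ (x - a, y + a)
            + φ (x + a, y - a) + φ (x - a, y - a))
          + (26 / 15) * (φ (x + a, y) + φ (x - a, y)
            + φ (x, y + a) + φ (x, y - a))
          - 6 * φ (x, y))
        - (a ^ 2 * lap2 φ (x, y) - a ^ 4 / 20 * lap2 (lap2 φ) (x, y)))
      =O[𝓝[≠] (0 : ℝ)] fun a : ℝ => a ^ 6 := by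
  have hcore := stencil_core φ hφ x y
  have heq : ∀ a : ℝ,
      ((-(2 / 15) * (φ (x, y + 2 * a) + φ (x, y - 2 * a)
            + φ (x + 2 * a, y) + φ (x - 2 * a, y))
          - (1 / 10) * (φ (x + a, y + a) + φ (x - a, y + a)
            + φ (x + a, y - a) + φ (x - a, y - a))
          + (26 / 15) * (φ (x + a, y) + φ (x - a, y)
            + φ (x, y + a) + φ (x, y - a))
          - 6 * φ (x, y))
        - (a ^ 2 * lap2 φ (x, y) - a ^ 4 / 20 * lap2 (lap2 φ) (x, y)))
      = (-(2/15)) * φ ((x, y) + a • ((0:ℝ), (2:ℝ))) + ((-(2/15)) * φ ((x, y) + a • ((0:ℝ), (-2:ℝ))) + ((-(2/15)) * φ ((x, y) + a • ((2:ℝ), (0:ℝ))) + ((-(2/15)) * φ ((x, y) + a • ((-2:ℝ), (0:ℝ))) + ((-(1/10)) * φ ((x, y) + a • ((1:ℝ), (1:ℝ))) + ((-(1/10)) * φ ((x, y) + a • ((-1:ℝ), (1:ℝ))) + ((-(1/10)) * φ ((x, y) + a • ((1:ℝ), (-1:ℝ))) + ((-(1/10)) * φ ((x, y) + a • ((-1:ℝ),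 (-1:ℝ))) + ((26/15) * φ ((x, y) + a • ((1:ℝ), (0:ℝ))) + ((26/15) * φ ((x, y) + a • ((-1:ℝ), (0:ℝ))) + ((26/15) * φ ((x, y) + a • ((0:ℝ), (1:ℝ))) + ((26/15) * φ ((x, y) + a • ((0:ℝ), (-1:ℝ))) + ((-6) * φ ((x, y) + a • ((0:ℝ), (0:ℝ))) + (a ^ 2 * (-(lap2 φ (x, y))) - a ^ 4 * (-(lap2 (lap2 φ) (x, y) / 20))))))))))))))) := by
    intro a
    simp only [Prod.smul_mk, Prod.mk_add_mk, smul_eq_mul]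
    norm_num
    ring_nf
  have : (fun a : ℝ =>
        (-(2 / 15) * (φ (x, y + 2 * a) + φ (x, y - 2 * a)
            + φ (x + 2 * a, y) + φ (x - 2 * a, y))
          - (1 / 10) * (φ (x + a, y + a) + φ (x - a, y + a)
            + φ (x + a, y - a) + φ (x - a, y - a))
          + (26 / 15) * (φ (x + a, y) + φ (x - a, y)
            + φ (x, y + a) + φ (x, y - a))
          - 6 * φ (x, y))
        - (a ^ 2 * lap2 φ (x, y) - a ^ 4 / 20 * lap2 (lap2 φ) (x, y)))
      = (fun a : ℝ => (-(2/15)) * φ ((x, y) + a • ((0:ℝ), (2:ℝ))) + ((-(2/15)) * φ ((x, y) + a • ((0:ℝ), (-2:ℝ))) + ((-(2/15)) * φ ((x, y) + a • ((2:ℝ), (0:ℝ))) + ((-(2/15)) * φ ((x, y) + a • ((-2:ℝ), (0:ℝ))) + ((-(1/10)) * φ ((x, y) + a • ((1:ℝ), (1:ℝ))) + ((-(1/10)) * φ ((x, y) + a • ((-1:ℝ), (1:ℝ))) + ((-(1/10)) * φ ((x, y) + a • ((1:ℝ), (-1:ℝ))) + ((-(1/10)) * φ ((x, y) + a • ((-1:ℝ),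 (-1:ℝ))) + ((26/15) * φ ((x, y) + a • ((1:ℝ), (0:ℝ))) + ((26/15) * φ ((x, y) + a • ((-1:ℝ), (0:ℝ))) + ((26/15) * φ ((x, y) + a • ((0:ℝ), (1:ℝ))) + ((26/15) * φ ((x, y) + a • ((0:ℝ), (-1:ℝ))) + ((-6) * φ ((x, y) + a • ((0:ℝ), (0:ℝ))) + (a ^ 2 * (-(lap2 φ (x, y))) - a ^ 4 * (-(lap2 (lap2 φ) (x, y) / 20)))))))))))))))) := funext heq
  rw [this]
  exact hcore.mono nhdsWithin_le_nhds
end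

section
/- For real μ > 0 let q⁻(μ) = (1/2)·( (1 − iμ) − √(1 + 6iμ − μ²) ) and q⁺(μ) = (1/2)·( (1 − iμ) + √(1 + 6iμ − μ²) ), where √ denotes the principal complex square root; these are the two eigenvalues of [[1,1],[iμ,−iμ]]. Then lim_{μ→0⁺} q⁻(μ)/μ = −2i and lim_{μ→0⁺} q⁺(μ) = 1. In particular, |q⁻(μ)| ∼ 2μ and |q⁺(μ)| → 1 as μ → 0⁺. -/
open Filter Topology

/-- `q⁻(μ) = (1/2)((1 − iμ) − √(1 + 6iμ − μ²))`, with the principal complex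
square root (`cpow` at exponent `1/2`). -/
noncomputable def qminus (μ : ℝ) : ℂ :=
  (1 / 2) * ((1 - Complex.I * (μ : ℂ))
    - (1 + 6 * Complex.I * (μ : ℂ) - (μ : ℂ) ^ 2) ^ ((1 : ℂ) / 2))

/-- `q⁺(μ) = (1/2)((1 − iμ) + √(1 + 6iμ − μ²))`, with the principal complex
square root (`cpow` at exponent `1/2`). -/
noncomputable def qplus (μ : ℝ) : ℂ :=
  (1 / 2) * ((1 - Complex.I * (μ : ℂ))
    + (1 + 6 * Complex.I * (μ : ℂ) - (μ : ℂ) ^ 2) ^ ((1 : ℂ) / 2))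

/-! `q⁻` vanishes at `μ = 0`, so `q⁻(μ)/μ` is a difference quotient and tends to `q⁻'(0) = −2i`,
computed by the chain rule (the discriminant equals `1` at `0`, inside the slit plane where the
principal square root is holomorphic). The limit of `q⁺` is its value `1` at `0`, by continuity. -/

open Complex

theorem tendsto_div_ofReal_of_hasDerivAt_zero {𝕜 : Type*} [RCLike 𝕜] {f : ℝ → 𝕜} {f' : 𝕜}
    (hf : HasDerivAt f f' 0) (hf0 : f 0 = 0) :
    Tendsto (fun t : ℝ => f t / t) (𝓝[≠] 0) (𝓝 f') := by
  refine (hasDerivAt_iff_tendsto_slope_zero.mp hf).congr fun t => ?_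
  simp [hf0, RCLike.real_smul_eq_coe_mul, div_eq_inv_mul]

noncomputable def sqrtDisc (z : ℂ) : ℂ := (1 + 6 * I * z - z ^ 2) ^ ((1 : ℂ) / 2)

theorem hasDerivAt_sqrtDisc_zero : HasDerivAt sqrtDisc (3 * I) 0 := by
  have hdisc : HasDerivAt (fun z : ℂ => 1 + 6 * I * z - z ^ 2) (6 * I) 0 :=
    ((((hasDerivAt_id (0 : ℂ)).const_mul (6 * I)).const_add 1).sub
      (hasDerivAt_pow 2 0)).congr_deriv (by simp)
  exact (hdisc.cpow_const (c := 1 / 2) (by simp)).congr_deriv (by norm_num; ring)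

theorem hasDerivAt_qminus_zero : HasDerivAt qminus (-2 * I) 0 := by
  have hlin : HasDerivAt (fun z : ℂ => 1 - I * z) (-I) 0 := by
    simpa using ((hasDerivAt_id (0 : ℂ)).const_mul I).const_sub 1
  exact (((hlin.sub hasDerivAt_sqrtDisc_zero).const_mul (1 / 2 : ℂ)).comp_ofReal).congr_deriv
    (by ring)

theorem qminus_zero : qminus 0 = 0 := by simp [qminus]

theorem continuousAt_qplus_zero : ContinuousAt qplus 0 := by
  have h : ContinuousAt (fun z : ℂ => 1 / 2 * ((1 - I * z) + sqrtDisc z)) 0 := by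
    have := hasDerivAt_sqrtDisc_zero.continuousAt
    fun_prop
  exact h.comp_of_eq continuous_ofReal.continuousAt ofReal_zero

theorem qplus_zero : qplus 0 = 1 := by norm_num [qplus]

/-- `lim_{μ→0⁺} q⁻(μ)/μ = −2i` and `lim_{μ→0⁺} q⁺(μ) = 1`;
in particular `|q⁻(μ)|/μ → 2` and `|q⁺(μ)| → 1` as `μ → 0⁺`. -/
theorem stmt_11 :
    Tendsto (fun μ : ℝ => qminus μ / (μ : ℂ)) (𝓝[>] 0) (𝓝 (-2 * Complex.I)) ∧
    Tendsto (fun μ : ℝ => qplus μ) (𝓝[>] 0) (𝓝 1) ∧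
    Tendsto (fun μ : ℝ => ‖qminus μ‖ / μ) (𝓝[>] 0) (𝓝 2) ∧
    Tendsto (fun μ : ℝ => ‖qplus μ‖) (𝓝[>] 0) (𝓝 1) := by
  have hminus : Tendsto (fun μ : ℝ => qminus μ / (μ : ℂ)) (𝓝[>] 0) (𝓝 (-2 * I)) :=
    (tendsto_div_ofReal_of_hasDerivAt_zero hasDerivAt_qminus_zero qminus_zero).mono_left
      (nhdsGT_le_nhdsNE 0)
  have hplus : Tendsto qplus (𝓝[>] 0) (𝓝 1) :=
    qplus_zero ▸ continuousAt_qplus_zero.tendsto.mono_left nhdsWithin_le_nhds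
  refine ⟨hminus, hplus, ?_, by simpa using hplus.norm⟩
  have h := hminus.norm
  rw [show ‖-2 * I‖ = 2 by simp] at h
  refine h.congr' ?_
  filter_upwards [self_mem_nhdsWithin] with μ (hμ : 0 < μ)
  simp [abs_of_pos hμ]
end
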